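/- Let 0 < ρ < s, let β(ρ) ∈ [0, π/2] satisfy cos β(ρ) = ρ/(2s), and let φ ∈ [β(ρ), π − β(ρ)]. Then ρ² − 2ρs cos φ ≥ ρ s sin(φ − β(ρ)). -/

import Mathlib

open Real

/-- for `0 < ρ < s`, `β ∈ [0, π/2]` with `cos β = ρ/(2s)` and
`φ ∈ [β, π - β]`, one has `ρ² - 2ρs cos φ ≥ ρ s sin(φ - β)`. -/
theorem trig_lower_bound (ρ s β φ : ℝ) (hρ : 0 < ρ) (hρs : ρ < s)
    (hβ0 : 0 ≤ β) (hβ1 : β ≤ π / 2) (hcos : Real.cos β = ρ / (2 * s))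
    (hφ1 : β ≤ φ) (hφ2 : φ ≤ π - β) :
    ρ * s * Real.sin (φ - β) ≤ ρ ^ 2 - 2 * ρ * s * Real.cos φ := by
  have hs : 0 < s := hρ.trans hρs
  have hcoshalf : Real.cos β ≤ 1 / 2 := by
    rw [hcos]; rw [div_le_div_iff₀ (by linarith) (by norm_num)]; linarith
  have hsinb0 : 0 ≤ Real.sin β :=
    Real.sin_nonneg_of_nonneg_of_le_pi hβ0 (by linarith [Real.pi_pos])
  have hsq := Real.sin_sq_add_cos_sq β
  have hcospos : 0 ≤ Real.cos β := by rw [hcos]; positivity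
  have hsinb : 1 / 2 ≤ Real.sin β := by nlinarith [sq_nonneg (Real.sin β - 1/2), sq_nonneg (Real.cos β)]
  have hsinφβ : 0 ≤ Real.sin (φ - β) :=
    Real.sin_nonneg_of_nonneg_of_le_pi (by linarith) (by linarith)
  have hcosφβ : Real.cos (φ - β) ≤ 1 := Real.cos_le_one _
  have hexp : Real.cos φ = Real.cos (φ - β) * Real.cos β - Real.sin (φ - β) * Real.sin β := by
    have := Real.cos_add (φ - β) β
    simpa using this
  rw [hexp, hcos]
  have h2 : 2 * ρ * s * (ρ / (2 * s)) = ρ ^ 2 := by field_simp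
  nlinarith [mul_le_mul_of_nonneg_left hcosφβ (sq_nonneg ρ), sq_nonneg ρ,
    mul_le_mul_of_nonneg_left hsinb (mul_nonneg (mul_nonneg (by norm_num : (0:ℝ) ≤ 2) hρ.le) hsinφβ)]
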